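/- arXiv:1901.05367 — 2 statements merged into one kernel-verified Lean document; each statement's English description precedes it below -/
import Mathlib

section
/- (Lemma 2, case (i)) Let k ∈ ℝ and x ∈ [0,1). There exists n₀ ∈ ℕ such that for all n ≥ n₀ with x + r_n(x,k) ∈ [−1/3, 2/3), Δ_n(x,k) = c_n(0,x) − ∫₀¹ c_n(v,x) dv + (x − 2/3)·(1 − c_n(0,x)·(n+1)/(n+x)) + r_{n+1}(x,k) − ((n+1)/(n+x))·c_n(0,x)·r_n(x,k). -/
open MeasureTheory ProbabilityTheory Filter Real Set
open scoped ENNReal NNReal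

/-- Distribution of `Z_λ = N_λ + U`, `N_λ` Poisson(λ), `U` uniform on `(0,1)`, independent. -/
noncomputable def zMeasure (l : ℝ) : Measure ℝ :=
  Measure.map (fun p : ℝ × ℝ => p.1 + p.2)
    ((Measure.map (Nat.cast : ℕ → ℝ) (poissonMeasure l.toNNReal)).prod
      (volume.restrict (Set.Ioo (0 : ℝ) 1)))

/-- The median of `Z_λ`: `inf {t : P(Z_λ ≤ t) ≥ 1/2}`. -/
noncomputable def medianZ (l : ℝ) : ℝ :=
  sInf {t : ℝ | (1 : ℝ≥0∞) / 2 ≤ zMeasure l (Set.Iic t)}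

/-- The function `H` of the main theorem. -/
noncomputable def Hfun (x : ℝ) : ℝ :=
  if x ≤ 2 / 3 then x ^ 2 * (x - 1) / 3 + 4 / 135
  else x / 3 * (x ^ 2 - 4 * x + 5) - 86 / 135

/-- `w_n(x,k) = P(Z_{n+x} ≤ n + x + 1/3 + k/(n+x))`. -/
noncomputable def w (n : ℕ) (x k : ℝ) : ℝ :=
  (zMeasure (n + x) (Set.Iic ((n : ℝ) + x + 1 / 3 + k / (n + x)))).toReal

/-- `r_n(x,k) = k/(n+x)`. -/
noncomputable def r (n : ℕ) (x k : ℝ) : ℝ := k / (n + x)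

/-- `g_n(u) = e^{-u} u^n`. -/
noncomputable def g (n : ℕ) (u : ℝ) : ℝ := Real.exp (-u) * u ^ n

/-- `c_n(v,x) = ((n+v+x)/(n+1+x))^{n+1} e^{1-v}`. -/
noncomputable def c (n : ℕ) (v x : ℝ) : ℝ :=
  (((n : ℝ) + v + x) / ((n : ℝ) + 1 + x)) ^ (n + 1) * Real.exp (1 - v)

/-- `Δ_n(x,k) = ((n+1)!/g_{n+1}(n+1+x)) (w_{n+1}(x,k) - w_n(x,k))`. -/
noncomputable def Δfun (n : ℕ) (x k : ℝ) : ℝ :=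
  ((n + 1).factorial : ℝ) / g (n + 1) ((n : ℝ) + 1 + x) * (w (n + 1) x k - w n x k)

/-! With `λ = n + x` and fractional offset `f = x + 1/3 + r_n(x,k) ∈ [0,1)`, one has
`w_n = P(Z_λ ≤ n + f) = ∑_{j<n} p_j(λ) + f p_n(λ)` with Poisson weights `p_j = g_j / j!`.
In `w_{n+1} - w_n` the two Poisson partial sums differ by `-∫_λ^{λ+1} g_n / n!`, because
`∑_{j≤n} g_j / j!` has derivative `-g_n / n!`. Since `c_n(v,x) = g_{n+1}(λ+v) / g_{n+1}(λ+1)` and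
`g_{n+1}' = (n+1) g_n - g_{n+1}`, integrating this derivative over `[λ, λ+1]` rewrites
`(n+1) ∫ g_n` through `c_n(0,x)` and `∫₀¹ c_n(v,x) dv`. For large `n` the hypothesis forces
`x ≤ 2/3`, and then the hypothesis at `n` propagates to `n + 1`, since `r_{n+1}` lies
between `0` and `r_n`. -/

theorem continuous_g (n : ℕ) : Continuous (g n) := by
  unfold g; fun_prop

theorem hasDerivAt_g_zero (t : ℝ) : HasDerivAt (g 0) (-g 0 t) t := by
  have h : g 0 = fun t => Real.exp (-t) := by ext; simp [g]
  simpa [h] using (hasDerivAt_neg t).exp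

theorem hasDerivAt_g_succ (n : ℕ) (t : ℝ) :
    HasDerivAt (g (n + 1)) ((n + 1) * g n t - g (n + 1) t) t := by
  refine ((hasDerivAt_neg t).exp.mul (hasDerivAt_pow (n + 1) t)).congr_deriv ?_
  simp only [g, Nat.cast_add, Nat.cast_one, add_tsub_cancel_right, pow_succ]
  ring

theorem hasDerivAt_sum_range_g_div_factorial (n : ℕ) (t : ℝ) :
    HasDerivAt (fun t => ∑ j ∈ Finset.range (n + 1), g j t / j.factorial)
      (-(g n t / n.factorial)) t := by
  induction n with
  | zero => simpa using hasDerivAt_g_zero t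
  | succ n ih =>
    simp_rw [Finset.sum_range_succ _ (n + 1)]
    refine (ih.add ((hasDerivAt_g_succ n t).div_const ((n + 1).factorial : ℝ))).congr_deriv ?_
    rw [Nat.factorial_succ, Nat.cast_mul]
    field_simp
    push_cast
    ring

theorem c_eq_g_div_g (n : ℕ) (v x : ℝ) :
    c n v x = g (n + 1) (n + v + x) / g (n + 1) (n + 1 + x) := by
  have : Real.exp (1 - v) = Real.exp (-(n + v + x)) / Real.exp (-(n + 1 + x)) := by
    rw [← Real.exp_sub]; ring_nf
  rw [c, g, g, this, div_pow, div_mul_div_comm, mul_comm _ (Real.exp _),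
    mul_comm _ (Real.exp _)]

theorem sum_range_g_div_factorial_sub (n : ℕ) (a b : ℝ) :
    ∑ j ∈ Finset.range (n + 1), g j b / j.factorial
      - ∑ j ∈ Finset.range (n + 1), g j a / j.factorial
      = -∫ t in a..b, g n t / n.factorial := by
  rw [← intervalIntegral.integral_neg, intervalIntegral.integral_eq_sub_of_hasDerivAt
    (fun t _ => hasDerivAt_sum_range_g_div_factorial n t)
    (((continuous_g n).div_const _).neg.intervalIntegrable _ _)]

theorem natCast_succ_mul_integral_g (n : ℕ) (a b : ℝ) :
    (n + 1) * ∫ t in a..b, g n t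
      = g (n + 1) b - g (n + 1) a + ∫ t in a..b, g (n + 1) t := by
  have hint (m : ℕ) := (continuous_g m).intervalIntegrable (μ := volume) a b
  rw [← intervalIntegral.integral_const_mul, ← sub_eq_iff_eq_add,
    ← intervalIntegral.integral_sub ((hint n).const_mul _) (hint (n + 1)),
    intervalIntegral.integral_eq_sub_of_hasDerivAt (fun t _ => hasDerivAt_g_succ n t)
    ((hint n).const_mul _ |>.sub (hint (n + 1)))]

theorem integral_c (n : ℕ) (x : ℝ) :
    ∫ v in (0 : ℝ)..1, c n v x
      = (∫ t in (n + x : ℝ)..(n + x + 1), g (n + 1) t) / g (n + 1) (n + 1 + x) := by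
  simp_rw [c_eq_g_div_g, intervalIntegral.integral_div]
  have := intervalIntegral.integral_comp_add_right (g (n + 1)) ((n : ℝ) + x) (a := 0) (b := 1)
  rw [zero_add, add_comm 1] at this
  rw [← this]
  congr 2 with v
  ring_nf

theorem volume_restrict_Ioo_zero_one_Iic (s : ℝ) :
    volume.restrict (Ioo (0 : ℝ) 1) (Iic s) = ENNReal.ofReal (min s 1) := by
  rw [Measure.restrict_congr_set Ioo_ae_eq_Ioc, Measure.restrict_apply measurableSet_Iic,
    inter_comm, Ioc_inter_Iic, Real.volume_Ioc, sub_zero, min_comm]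

theorem zMeasure_Iic (l t : ℝ) :
    zMeasure l (Iic t)
      = ∑' j : ℕ, ENNReal.ofReal (min (t - j) 1) * poissonMeasure l.toNNReal {j} := by
  have hadd : Measurable fun p : ℝ × ℝ => p.1 + p.2 := measurable_fst.add measurable_snd
  rw [zMeasure, Measure.map_apply hadd measurableSet_Iic, Measure.prod_apply (hadd measurableSet_Iic)]
  have hsec (a : ℝ) : Prod.mk a ⁻¹' ((fun p : ℝ × ℝ => p.1 + p.2) ⁻¹' Iic t) = Iic (t - a) := by
    ext b; simp [le_sub_iff_add_le']
  simp_rw [hsec, volume_restrict_Ioo_zero_one_Iic]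
  rw [lintegral_map (by fun_prop) measurable_from_nat, lintegral_countable']

theorem poissonMeasure_toNNReal_singleton {l : ℝ} (hl : 0 ≤ l) (j : ℕ) :
    poissonMeasure l.toNNReal {j} = ENNReal.ofReal (g j l / j.factorial) := by
  rw [poissonMeasure_singleton, Real.coe_toNNReal _ hl, g]

theorem zMeasure_Iic_natCast_add_toReal {l : ℝ} (hl : 0 ≤ l) (m : ℕ) {f : ℝ}
    (hf : f ∈ Ico 0 1) :
    (zMeasure l (Iic (m + f))).toReal
      = ∑ j ∈ Finset.range m, g j l / j.factorial + g m l / m.factorial * f := by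
  have hg (j : ℕ) : 0 ≤ g j l / j.factorial := by unfold g; positivity
  have hsum : 0 ≤ ∑ j ∈ Finset.range m, g j l / j.factorial := Finset.sum_nonneg fun j _ => hg j
  have hvanish (j : ℕ) (hj : j ∉ Finset.range (m + 1)) :
      ENNReal.ofReal (min (m + f - j) 1) * poissonMeasure l.toNNReal {j} = 0 := by
    have : (m : ℝ) + 1 ≤ j := by exact_mod_cast Finset.mem_range.not.mp hj |> not_lt.mp
    rw [ENNReal.ofReal_of_nonpos (by linarith [min_le_left (m + f - j) 1, hf.2]), zero_mul]
  have hbelow (j : ℕ) (hj : j ∈ Finset.range m) :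
      ENNReal.ofReal (min (m + f - j) 1) * poissonMeasure l.toNNReal {j}
        = ENNReal.ofReal (g j l / j.factorial) := by
    have : (j : ℝ) + 1 ≤ m := by exact_mod_cast Finset.mem_range.mp hj
    rw [min_eq_right (by linarith [hf.1]), ENNReal.ofReal_one, one_mul,
      poissonMeasure_toNNReal_singleton hl]
  rw [zMeasure_Iic, tsum_eq_sum hvanish, Finset.sum_range_succ, Finset.sum_congr rfl hbelow,
    add_sub_cancel_left, min_eq_left hf.2.le, poissonMeasure_toNNReal_singleton hl,
    ← ENNReal.ofReal_mul hf.1, ← ENNReal.ofReal_sum_of_nonneg fun j _ => hg j,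
    ← ENNReal.ofReal_add hsum (mul_nonneg hf.1 (hg m)),
    ENNReal.toReal_ofReal (add_nonneg hsum (mul_nonneg hf.1 (hg m))), mul_comm f]

theorem w_eq_sum_range {m : ℕ} {x k : ℝ} (hm : 0 ≤ m + x)
    (h : x + r m x k ∈ Ico (-(1 : ℝ) / 3) (2 / 3)) :
    w m x k = ∑ j ∈ Finset.range m, g j (m + x) / j.factorial
      + g m (m + x) / m.factorial * (x + 1 / 3 + r m x k) := by
  have hf : x + 1 / 3 + r m x k ∈ Ico 0 1 := ⟨by linarith [h.1], by linarith [h.2]⟩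
  rw [w, ← zMeasure_Iic_natCast_add_toReal hm m hf, r]
  ring_nf

theorem Δfun_eq {n : ℕ} {x k : ℝ} (hn : 0 < n + x)
    (h : x + r n x k ∈ Ico (-(1 : ℝ) / 3) (2 / 3))
    (h' : x + r (n + 1) x k ∈ Ico (-(1 : ℝ) / 3) (2 / 3)) :
    Δfun n x k
      = c n 0 x - (∫ v in (0 : ℝ)..1, c n v x)
        + (x - 2 / 3) * (1 - c n 0 x * (((n : ℝ) + 1) / ((n : ℝ) + x)))
        + r (n + 1) x k
        - ((n : ℝ) + 1) / ((n : ℝ) + x) * c n 0 x * r n x k := by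
  set a : ℝ := n + x with ha
  have hw := w_eq_sum_range hn.le h
  have hw' := w_eq_sum_range (m := n + 1) (by push_cast; linarith) h'
  rw [← ha] at hw
  push_cast at hw'
  rw [show (n : ℝ) + 1 + x = a + 1 by ring] at hw'
  have hc0 : c n 0 x = g (n + 1) a / g (n + 1) (a + 1) := by
    rw [c_eq_g_div_g, ha]; ring_nf
  have hcint : ∫ v in (0 : ℝ)..1, c n v x
      = (∫ t in a..(a + 1), g (n + 1) t) / g (n + 1) (a + 1) := by
    rw [integral_c, ha]; ring_nf
  have hS := sum_range_g_div_factorial_sub n a (a + 1)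
  rw [Finset.sum_range_succ (fun j => g j a / j.factorial), intervalIntegral.integral_div] at hS
  have hI := natCast_succ_mul_integral_g n a (a + 1)
  set I := ∫ t in a..(a + 1), g n t
  set J := ∫ t in a..(a + 1), g (n + 1) t
  set S₁ := ∑ j ∈ Finset.range (n + 1), g j (a + 1) / j.factorial
  have hS₁ : S₁ = ∑ j ∈ Finset.range n, g j a / j.factorial + g n a / n.factorial
      - I / n.factorial := by linarith
  have hJ : J = (n + 1) * I - g (n + 1) (a + 1) + g (n + 1) a := by linarith
  have hga : g (n + 1) a = a * g n a := by simp only [g, pow_succ]; ring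
  have hG : g (n + 1) (a + 1) ≠ 0 := by unfold g; positivity
  have hr : r n x k = k / a := rfl
  have hr' : r (n + 1) x k = k / (a + 1) := by rw [r, ha]; push_cast; ring_nf
  rw [Δfun, hw, hw', hc0, hcint, show (n : ℝ) + 1 + x = a + 1 by ring, hr, hr', hS₁, hJ, hga,
    Nat.factorial_succ, Nat.cast_mul]
  field_simp
  push_cast
  ring

theorem two_thirds_le_add_r {n : ℕ} {x k : ℝ} (hx : 2 / 3 < x) (hn : |k| / (x - 2 / 3) < n) :
    2 / 3 ≤ x + r n x k := by
  have hnx : 0 < (n : ℝ) + x := by positivity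
  have hk : |k| < (n + x) * (x - 2 / 3) := by
    rw [div_lt_iff₀ (by linarith)] at hn; nlinarith
  have : -(x - 2 / 3) ≤ k / (n + x) := by
    rw [le_div_iff₀ hnx]; nlinarith [neg_abs_le k]
  rw [r]; linarith

theorem add_r_succ_mem_Ico {n : ℕ} {x k : ℝ} (hx : x ∈ Icc (-(1 : ℝ) / 3) (2 / 3)) (hn : 0 < n + x)
    (h : x + r n x k ∈ Ico (-(1 : ℝ) / 3) (2 / 3)) :
    x + r (n + 1) x k ∈ Ico (-(1 : ℝ) / 3) (2 / 3) := by
  have hr : r (n + 1) x k = (n + x) / (n + x + 1) * r n x k := by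
    have : (n : ℝ) + 1 + x ≠ 0 := by linarith
    rw [r, r]; push_cast; field_simp; ring
  have hθ₀ : 0 < (n + x) / (n + x + 1) := by positivity
  have hθ₁ : (n + x) / (n + x + 1) ≤ 1 := by rw [div_le_one (by linarith)]; linarith
  -- `x + θ r_n` is a convex combination of `x` and `x + r_n`, with weight `θ > 0` on the latter.
  rw [hr]
  constructor <;> nlinarith [h.1, h.2, hx.1, hx.2]

theorem lemma2_case_i (k x : ℝ) (hx : x ∈ Set.Ico (0 : ℝ) 1) :
    ∃ n₀ : ℕ, ∀ n : ℕ, n₀ ≤ n →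
      x + r n x k ∈ Set.Ico (-(1 : ℝ) / 3) (2 / 3) →
      Δfun n x k
        = c n 0 x - (∫ v in (0 : ℝ)..1, c n v x)
          + (x - 2 / 3) * (1 - c n 0 x * (((n : ℝ) + 1) / ((n : ℝ) + x)))
          + r (n + 1) x k
          - ((n : ℝ) + 1) / ((n : ℝ) + x) * c n 0 x * r n x k := by
  refine ⟨⌈|k| / (x - 2 / 3)⌉₊ + 1, fun n hn h => ?_⟩
  have hn₁ : (1 : ℝ) ≤ n := by exact_mod_cast le_add_self.trans hn
  have hnx : 0 < (n : ℝ) + x := by linarith [hx.1]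
  have hx₂₃ : x ≤ 2 / 3 := by
    by_contra! hx₂₃
    have hk : |k| / (x - 2 / 3) < n :=
      (Nat.le_ceil _).trans_lt (by exact_mod_cast Nat.lt_of_succ_le hn)
    exact (two_thirds_le_add_r hx₂₃ hk).not_gt h.2
  exact Δfun_eq hnx h (add_r_succ_mem_Ico ⟨by linarith [hx.1], hx₂₃⟩ hnx h)
end

section
/- (Lemma 4 (iv)) For fixed x ∈ [0,1], as n → ∞, 1 − c_n(0,x)·(n+1)/(n+x) = −(1/2)/(n+1+x) + (1/(n+1+x)²)·(x²/2 − x/2 − 7/24) + o(1/n²); i.e. n² times the difference of the two sides tends to 0. -/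
open MeasureTheory ProbabilityTheory Filter Real Set
open scoped ENNReal NNReal

/-!
With `t = 1 / (n + 1 + x)` one has `c_n(0,x) (n+1)/(n+x) = exp S`, where
`S = 1 + n log (1 - t) + log (1 - x t)` and `n t = 1 - (1 + x) t`. Expanding the two logarithms
gives `S = t/2 + (1/6 + x/2 - x²/2) t² + O(t³)`, hence
`exp S = 1 + S + S²/2 + O(t³) = 1 + t/2 + (7/24 + x/2 - x²/2) t² + O(t³)`, all with explicit
constants. Since `t ≤ 1/n`, the remainder multiplied by `n²` is `O(1/n)`.
-/

lemma abs_log_one_sub_add_sum_le {t : ℝ} (ht0 : 0 ≤ t) (ht : t ≤ 1 / 2) (k : ℕ) :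
    |log (1 - t) + ∑ i ∈ Finset.range k, t ^ (i + 1) / (i + 1)| ≤ 2 * t ^ (k + 1) := by
  have h := Real.abs_log_sub_add_sum_range_le (x := t) (by rw [abs_of_nonneg ht0]; linarith) k
  rw [abs_of_nonneg ht0, add_comm] at h
  refine h.trans ?_
  rw [div_le_iff₀ (by linarith)]
  nlinarith [pow_nonneg ht0 (k + 1)]

lemma abs_exp_sub_quadratic_le {s : ℝ} (hs : |s| ≤ 1) :
    |exp s - (1 + s + s ^ 2 / 2)| ≤ |s| ^ 3 := by
  have h := Real.exp_bound hs (n := 3) (by norm_num)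
  norm_num [Finset.sum_range_succ, Nat.factorial] at h
  nlinarith [pow_nonneg (abs_nonneg s) 3]

lemma abs_exponent_sub_quadratic_le {x n t : ℝ} (hx0 : 0 ≤ x) (hx1 : x ≤ 1)
    (hnt : (n + 1 + x) * t = 1) (ht0 : 0 < t) (ht : t ≤ 1 / 20) :
    |1 + n * log (1 - t) + log (1 - x * t) - t / 2 - (1 / 6 + x / 2 - x ^ 2 / 2) * t ^ 2|
      ≤ 5 * t ^ 3 := by
  have hxt : x * t ≤ t := by nlinarith
  have hxt0 : 0 ≤ x * t := by positivity
  set E₁ := log (1 - t) + (t + t ^ 2 / 2 + t ^ 3 / 3)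
  set E₂ := log (1 - x * t) + (x * t + (x * t) ^ 2 / 2)
  have hE₁ : |E₁| ≤ 2 * t ^ 4 := by
    have h := abs_log_one_sub_add_sum_le ht0.le (by linarith) 3
    simp only [Finset.sum_range_succ, Finset.sum_range_zero] at h
    norm_num at h
    convert h using 3
  have hE₂ : |E₂| ≤ 2 * t ^ 3 := by
    have h := abs_log_one_sub_add_sum_le hxt0 (by linarith) 2
    simp only [Finset.sum_range_succ, Finset.sum_range_zero] at h
    norm_num at h
    have : (x * t) ^ 3 ≤ t ^ 3 := pow_le_pow_left₀ hxt0 hxt 3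
    calc |E₂| = |log (1 - x * t) + (x * t + (x * t) ^ 2 / 2)| := rfl
      _ ≤ 2 * (x * t) ^ 3 := by convert h using 3
      _ ≤ 2 * t ^ 3 := by linarith
  have hn0 : 0 ≤ n := by nlinarith
  have hnt1 : n * t ≤ 1 := by nlinarith
  have hnE₁ : |n * E₁| ≤ 2 * t ^ 3 := by
    rw [abs_mul, abs_of_nonneg hn0]
    calc n * |E₁| ≤ n * (2 * t ^ 4) := by gcongr
      _ = (n * t) * (2 * t ^ 3) := by ring
      _ ≤ 2 * t ^ 3 := by nlinarith [pow_pos ht0 3]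
  -- the terms of order `1`, `t` and `t²` cancel because `n t = 1 - (1 + x) t`
  have hsplit : 1 + n * log (1 - t) + log (1 - x * t) - t / 2 - (1 / 6 + x / 2 - x ^ 2 / 2) * t ^ 2
      = (1 + x) * t ^ 3 / 3 + n * E₁ + E₂ := by
    linear_combination (-(1 + t / 2 + t ^ 2 / 3)) * hnt
  have hcubic : |(1 + x) * t ^ 3 / 3| ≤ 2 / 3 * t ^ 3 := by
    rw [abs_of_nonneg (by positivity)]; nlinarith [pow_pos ht0 3]
  rw [hsplit]
  calc _ ≤ |(1 + x) * t ^ 3 / 3| + |n * E₁| + |E₂| := abs_add_three _ _ _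
    _ ≤ 5 * t ^ 3 := by nlinarith [pow_pos ht0 3]

lemma abs_one_sub_exp_sub_quadratic_le {S b t : ℝ} (hS : |S - t / 2 - b * t ^ 2| ≤ 5 * t ^ 3)
    (hb : |b| ≤ 1) (ht0 : 0 ≤ t) (ht : t ≤ 1 / 20) :
    |1 - exp S + t / 2 + (b + 1 / 8) * t ^ 2| ≤ 8 * t ^ 3 := by
  have hbt : |b * t ^ 2| ≤ t ^ 2 := by
    rw [abs_mul, abs_of_nonneg (sq_nonneg t)]; nlinarith [sq_nonneg t]
  have ht3 : t ^ 3 ≤ t ^ 2 / 20 := by nlinarith [sq_nonneg t]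
  have hlin : |S - t / 2| ≤ 2 * t ^ 2 := by
    linarith [abs_sub_abs_le_abs_sub (S - t / 2) (b * t ^ 2), sq_nonneg t]
  have hSt : |S| ≤ t := by
    have := abs_sub_abs_le_abs_sub S (t / 2)
    rw [abs_of_nonneg (by positivity : 0 ≤ t / 2)] at this
    nlinarith
  have hexp : |exp S - (1 + S + S ^ 2 / 2)| ≤ t ^ 3 :=
    (abs_exp_sub_quadratic_le (hSt.trans (by linarith))).trans
      (pow_le_pow_left₀ (abs_nonneg S) hSt 3)
  have hprod : |(S - t / 2) * (S + t / 2) / 2| ≤ 2 * t ^ 3 := by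
    have hsum : |S + t / 2| ≤ 2 * t := (abs_add_le _ _).trans (by
      rw [abs_of_nonneg (by positivity : 0 ≤ t / 2)]; linarith)
    rw [abs_div, abs_mul, abs_two]
    have := mul_le_mul hlin hsum (abs_nonneg _) (by positivity)
    nlinarith
  have hsplit : 1 - exp S + t / 2 + (b + 1 / 8) * t ^ 2
      = -(exp S - (1 + S + S ^ 2 / 2)) - (S - t / 2 - b * t ^ 2) - (S - t / 2) * (S + t / 2) / 2 := by
    ring
  rw [hsplit]
  calc _ ≤ |exp S - (1 + S + S ^ 2 / 2)| + |S - t / 2 - b * t ^ 2|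
          + |(S - t / 2) * (S + t / 2) / 2| := by
        refine (abs_sub _ _).trans ?_
        gcongr
        exact (abs_sub _ _).trans (by rw [abs_neg])
    _ ≤ 8 * t ^ 3 := by linarith

lemma c_zero_mul_eq_exp (n : ℕ) {x : ℝ} (hx : 0 ≤ x) (hnx : 0 < (n : ℝ) + x) :
    c n 0 x * (((n : ℝ) + 1) / ((n : ℝ) + x))
      = exp (1 + n * log (1 - 1 / (n + 1 + x)) + log (1 - x * (1 / (n + 1 + x)))) := by
  have hm : (n : ℝ) + 1 + x ≠ 0 := by positivity
  have h₁ : 1 - 1 / ((n : ℝ) + 1 + x) = (n + x) / (n + 1 + x) := by field_simp; ring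
  have h₂ : 1 - x * (1 / ((n : ℝ) + 1 + x)) = (n + 1) / (n + 1 + x) := by field_simp; ring
  rw [h₁, h₂, exp_add, exp_add, exp_nat_mul, exp_log (by positivity), exp_log (by positivity), c,
    add_zero, sub_zero, pow_succ]
  field_simp

lemma abs_one_sub_c_zero_mul_sub_le {n : ℕ} (hn : 19 ≤ n) {x : ℝ} (hx0 : 0 ≤ x) (hx1 : x ≤ 1) :
    |(1 - c n 0 x * (((n : ℝ) + 1) / ((n : ℝ) + x))) -
        (-(1 / 2) / ((n : ℝ) + 1 + x)
          + 1 / ((n : ℝ) + 1 + x) ^ 2 * (x ^ 2 / 2 - x / 2 - 7 / 24))|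
      ≤ 8 * (1 / ((n : ℝ) + 1 + x)) ^ 3 := by
  have hn' : (19 : ℝ) ≤ n := by exact_mod_cast hn
  set t := 1 / ((n : ℝ) + 1 + x) with ht_def
  have hm : 0 < (n : ℝ) + 1 + x := by linarith
  have hnt : ((n : ℝ) + 1 + x) * t = 1 := by rw [ht_def]; field_simp
  have ht0 : 0 < t := by positivity
  have ht : t ≤ 1 / 20 := by rw [ht_def]; gcongr; linarith
  have hb : |1 / 6 + x / 2 - x ^ 2 / 2| ≤ 1 := by
    rw [abs_le]; constructor <;> nlinarith
  have key := abs_one_sub_exp_sub_quadratic_le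
    (abs_exponent_sub_quadratic_le hx0 hx1 hnt ht0 ht) hb ht0.le ht
  rw [c_zero_mul_eq_exp n hx0 (by linarith), ← ht_def]
  convert key using 2
  rw [ht_def]
  field_simp
  ring

theorem lemma4_iv (x : ℝ) (hx : x ∈ Set.Icc (0 : ℝ) 1) :
    Tendsto (fun n : ℕ => (n : ℝ) ^ 2 *
      ((1 - c n 0 x * (((n : ℝ) + 1) / ((n : ℝ) + x))) -
        (-(1 / 2) / ((n : ℝ) + 1 + x)
          + 1 / ((n : ℝ) + 1 + x) ^ 2 * (x ^ 2 / 2 - x / 2 - 7 / 24))))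
      atTop (nhds 0) := by
  obtain ⟨hx0, hx1⟩ := hx
  refine squeeze_zero_norm' ?_ (tendsto_const_div_atTop_nhds_zero_nat 8)
  filter_upwards [eventually_ge_atTop 19] with n hn
  have hn0 : (0 : ℝ) < n := by exact_mod_cast (by omega : 0 < n)
  have ht : 1 / ((n : ℝ) + 1 + x) ≤ 1 / n := by gcongr; linarith
  rw [norm_mul, norm_pow, Real.norm_natCast, Real.norm_eq_abs]
  calc (n : ℝ) ^ 2 * |_| ≤ (n : ℝ) ^ 2 * (8 * (1 / (n : ℝ)) ^ 3) := by
        gcongr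
        exact (abs_one_sub_c_zero_mul_sub_le hn hx0 hx1).trans (by gcongr)
    _ = 8 / (n : ℝ) := by field_simp
end
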